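/- Let δ ∈ {0, 1}, A, B real with −1 < B ≤ 0 < A ≤ 1, and let γ, β be positive real numbers satisfying √2 e (γ(1 + e²)² + β(1 − 2e⁴ − e²)) ≥ ((1 + A)/(1 + B) + ω₀^δ)(e² + 1)^{7/2}. If p ∈ ℋ satisfies (p(z))^δ + γ z p′(z) + β z² p″(z) ≺ (1 + Az)/(1 + Bz), then p(z) ≺ 𝔅(z). -/

import Mathlib

open Complex

noncomputable section

/-- The open unit disk in the complex plane. -/
def unitDisk : Set ℂ := Metric.ball 0 1

/-- `f` is subordinate to `g` on the unit disk: there is an analytic Schwarz function `w`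
with `w 0 = 0`, `|w z| < 1` on the disk, and `f = g ∘ w` on the disk. -/
def Subord (f g : ℂ → ℂ) : Prop :=
  ∃ w : ℂ → ℂ, DifferentiableOn ℂ w unitDisk ∧ w 0 = 0 ∧
    (∀ z ∈ unitDisk, ‖w z‖ < 1) ∧ ∀ z ∈ unitDisk, f z = g (w z)

/-- The function `𝔅(z) = √(1 + tanh z)` (principal branch). -/
def bean (z : ℂ) : ℂ := (1 + Complex.tanh z) ^ ((1 : ℂ) / 2)

/-- `R₀ = e √(2/(e² - 1))`. -/
def R₀ : ℝ := Real.exp 1 * Real.sqrt (2 / (Real.exp 1 ^ 2 - 1))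

/-- `ω₀ = max_{θ ∈ [0, 2π)} |𝔅(e^{iθ})|`. -/
def ω₀ : ℝ :=
  sSup ((fun θ : ℝ => ‖bean (Complex.exp (θ * Complex.I))‖) '' Set.Ico 0 (2 * Real.pi))

/-! `F = p^δ + γ z p' + β z² p''` is subordinate to the Janowski function, so by the Schwarz lemma
`|F(z) - 1| ≤ K|z|` with `K = (A - B)/(1 + B)`. With `θ = z d/dz` and `q = p - 1`, `F - 1`
factors into first-order operators `1 + νθ` (and one `θ` when `δ = 0`) applied to `q`. Each is
inverted along rays: `s ↦ s v(s^ν z)` has derivative `((1 + νθ) v)(s^ν z)`, so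
`|(1 + νθ) v| ≤ H|z|` forces `|v| ≤ H|z|/(1 + ν)`. This gives `|p - 1| ≤ K/γ`, which the
coefficient condition makes at most `1/5`; then `w = artanh (p² - 1)` is a Schwarz function with
`𝔅 ∘ w = √(p²) = p`. -/

open Metric Set Filter Topology

lemma norm_sub_one_le_of_subord_janowski {f : ℂ → ℂ} {A B : ℂ} (hB : ‖B‖ < 1)
    (h : Subord f (fun z => (1 + A * z) / (1 + B * z))) :
    ∀ z ∈ unitDisk, ‖f z - 1‖ ≤ ‖A - B‖ / (1 - ‖B‖) * ‖z‖ := by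
  obtain ⟨w, hw, hw0, hw1, hfw⟩ := h
  intro z hz
  have hwz : ‖w z‖ ≤ ‖z‖ := Complex.norm_le_norm_of_mapsTo_ball hw
    (fun x hx => mem_closedBall_zero_iff.2 (hw1 x hx).le) hw0 (mem_ball_zero_iff.1 hz)
  have hden : 1 - ‖B‖ ≤ ‖1 + B * w z‖ := by
    have hBw : ‖B * w z‖ ≤ ‖B‖ := by
      rw [norm_mul]
      exact mul_le_of_le_one_right (norm_nonneg B) (hw1 z hz).le
    have := norm_sub_norm_le (1 : ℂ) (-(B * w z))
    simp only [norm_one, norm_neg, sub_neg_eq_add] at this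
    linarith
  have hden0 : 1 + B * w z ≠ 0 := norm_pos_iff.1 (by linarith)
  rw [hfw z hz, div_sub_one hden0, norm_div, div_mul_eq_mul_div]
  gcongr
  calc ‖1 + A * w z - (1 + B * w z)‖ = ‖A - B‖ * ‖w z‖ := by rw [← norm_mul]; congr 1; ring
    _ ≤ ‖A - B‖ * ‖z‖ := by gcongr

lemma norm_sub_one_le_of_subord_janowski_ofReal {f : ℂ → ℂ} {A B : ℝ} (hB1 : -1 < B)
    (hB0 : B ≤ 0) (hBA : B ≤ A) (h : Subord f (fun z => (1 + (A : ℂ) * z) / (1 + (B : ℂ) * z))) :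
    ∀ z ∈ unitDisk, ‖f z - 1‖ ≤ (A - B) / (1 + B) * ‖z‖ := by
  have hBnorm : ‖(B : ℂ)‖ = -B := by rw [Complex.norm_real, Real.norm_of_nonpos hB0]
  have hABnorm : ‖(A : ℂ) - B‖ = A - B := by
    rw [← Complex.ofReal_sub, Complex.norm_real, Real.norm_of_nonneg (sub_nonneg.2 hBA)]
  intro z hz
  have := norm_sub_one_le_of_subord_janowski (by linarith) h z hz
  rwa [hBnorm, hABnorm, sub_neg_eq_add] at this

lemma ofReal_rpow_mul_mem_unitDisk {z : ℂ} (hz : z ∈ unitDisk) {ν s : ℝ} (hν : 0 ≤ ν)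
    (hs : s ∈ Icc (0 : ℝ) 1) : ((s ^ ν : ℝ) : ℂ) * z ∈ unitDisk := by
  rw [unitDisk, mem_ball_zero_iff] at *
  rw [norm_mul, Complex.norm_of_nonneg (Real.rpow_nonneg hs.1 ν)]
  nlinarith [norm_nonneg z, Real.rpow_le_one hs.1 hs.2 hν, Real.rpow_nonneg hs.1 ν]

lemma hasDerivWithinAt_mul_comp_rpow {v : ℂ → ℂ} (hv : AnalyticOnNhd ℂ v unitDisk)
    (hv0 : v 0 = 0) {ν : ℝ} (hν : 0 < ν) {z : ℂ} (hz : z ∈ unitDisk) {s : ℝ}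
    (hs : s ∈ Ico (0 : ℝ) 1) :
    HasDerivWithinAt (fun s : ℝ => (s : ℂ) * v (((s ^ ν : ℝ) : ℂ) * z))
      (v (((s ^ ν : ℝ) : ℂ) * z) +
        ν * (((s ^ ν : ℝ) : ℂ) * z * deriv v (((s ^ ν : ℝ) : ℂ) * z))) (Ici s) s := by
  have hmem : ∀ s ∈ Icc (0 : ℝ) 1, ((s ^ ν : ℝ) : ℂ) * z ∈ unitDisk := fun s hs =>
    ofReal_rpow_mul_mem_unitDisk hz hν.le hs
  rcases hs.1.eq_or_lt with rfl | hs0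
  · -- `s ↦ s^ν` need not be differentiable at `0`, but the slope `v (s^ν z)` tends to `v 0 = 0`
    simp only [Real.zero_rpow hν.ne', Complex.ofReal_zero, zero_mul, hv0, mul_zero, add_zero]
    refine (hasDerivAt_iff_tendsto_slope.2 ?_).hasDerivWithinAt
    have hpath : Continuous fun s : ℝ => ((s ^ ν : ℝ) : ℂ) * z :=
      (Complex.continuous_ofReal.comp (Real.continuous_rpow_const hν.le)).mul continuous_const
    have hcont : ContinuousAt (fun s : ℝ => v (((s ^ ν : ℝ) : ℂ) * z)) 0 :=
      (hv _ (hmem 0 (left_mem_Icc.2 zero_le_one))).continuousAt.comp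
        (f := fun s : ℝ => ((s ^ ν : ℝ) : ℂ) * z) hpath.continuousAt
    have hlim := hcont.tendsto.mono_left (nhdsWithin_le_nhds (s := {(0 : ℝ)}ᶜ))
    simp only [Real.zero_rpow hν.ne', Complex.ofReal_zero, zero_mul, hv0] at hlim
    refine hlim.congr' (eventually_nhdsWithin_of_forall fun s (hs : s ≠ 0) => ?_)
    simp [slope, hs]
  · have hpath : HasDerivAt (fun s : ℝ => ((s ^ ν : ℝ) : ℂ) * z)
        (((ν * s ^ (ν - 1) : ℝ) : ℂ) * z) s :=
      (Real.hasDerivAt_rpow_const (Or.inl hs0.ne')).ofReal_comp.mul_const z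
    have hvp := ((hv _ (hmem s ⟨hs.1, hs.2.le⟩)).differentiableAt.hasDerivAt).comp s hpath
    have hu : HasDerivAt (fun s : ℝ => (s : ℂ) * v (((s ^ ν : ℝ) : ℂ) * z))
        (1 * v (((s ^ ν : ℝ) : ℂ) * z) +
          s * (deriv v (((s ^ ν : ℝ) : ℂ) * z) * (((ν * s ^ (ν - 1) : ℝ) : ℂ) * z))) s :=
      (hasDerivAt_id s).ofReal_comp.mul hvp
    refine (hu.congr_deriv ?_).hasDerivWithinAt
    have hrpow : ((s ^ ν : ℝ) : ℂ) = s * ((s ^ (ν - 1) : ℝ) : ℂ) := by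
      have : (s : ℂ) ≠ 0 := by exact_mod_cast hs0.ne'
      rw [Real.rpow_sub_one hs0.ne']
      push_cast
      field_simp
    rw [hrpow]
    push_cast
    ring

lemma norm_le_of_norm_add_mul_deriv_le {v : ℂ → ℂ} (hv : AnalyticOnNhd ℂ v unitDisk)
    (hv0 : v 0 = 0) {ν H : ℝ} (hν : 0 < ν)
    (h : ∀ z ∈ unitDisk, ‖v z + ν * (z * deriv v z)‖ ≤ H * ‖z‖) :
    ∀ z ∈ unitDisk, ‖v z‖ ≤ H / (1 + ν) * ‖z‖ := by
  intro z hz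
  have hmem : ∀ s ∈ Icc (0 : ℝ) 1, ((s ^ ν : ℝ) : ℂ) * z ∈ unitDisk := fun s hs =>
    ofReal_rpow_mul_mem_unitDisk hz hν.le hs
  have hcont : ContinuousOn (fun s : ℝ => (s : ℂ) * v (((s ^ ν : ℝ) : ℂ) * z)) (Icc 0 1) :=
    Complex.continuous_ofReal.continuousOn.mul (hv.continuousOn.comp
      ((Complex.continuous_ofReal.comp (Real.continuous_rpow_const hν.le)).mul
        continuous_const).continuousOn hmem)
  have hbound : ∀ s ∈ Ico (0 : ℝ) 1, ‖v (((s ^ ν : ℝ) : ℂ) * z) +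
      ν * (((s ^ ν : ℝ) : ℂ) * z * deriv v (((s ^ ν : ℝ) : ℂ) * z))‖ ≤ H * ‖z‖ * s ^ ν := by
    intro s hs
    calc _ ≤ H * ‖((s ^ ν : ℝ) : ℂ) * z‖ := h _ (hmem s (Ico_subset_Icc_self hs))
      _ = H * ‖z‖ * s ^ ν := by
        rw [norm_mul, Complex.norm_of_nonneg (Real.rpow_nonneg hs.1 ν)]; ring
  have hB : ∀ s : ℝ, HasDerivAt (fun s => H * ‖z‖ / (1 + ν) * s ^ (1 + ν)) (H * ‖z‖ * s ^ ν) s := by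
    intro s
    refine ((Real.hasDerivAt_rpow_const (Or.inr (by linarith : (1 : ℝ) ≤ 1 + ν))).const_mul
      (H * ‖z‖ / (1 + ν))).congr_deriv ?_
    rw [add_sub_cancel_left]
    field_simp
  have key := image_norm_le_of_norm_deriv_right_le_deriv_boundary hcont
    (fun s hs => hasDerivWithinAt_mul_comp_rpow hv hv0 hν hz hs)
    (by simp [Real.zero_rpow hν.ne', Real.zero_rpow (by linarith : 1 + ν ≠ 0)]) hB hbound
    (right_mem_Icc.2 zero_le_one)
  simpa [div_mul_eq_mul_div, mul_right_comm] using key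

lemma norm_deriv_le_of_norm_mul_deriv_le {q : ℂ → ℂ} (hq : AnalyticOnNhd ℂ q unitDisk) {c : ℝ}
    (h : ∀ z ∈ unitDisk, ‖z * deriv q z‖ ≤ c * ‖z‖) : ∀ z ∈ unitDisk, ‖deriv q z‖ ≤ c := by
  have off_zero : ∀ z ∈ unitDisk, z ≠ 0 → ‖deriv q z‖ ≤ c := fun z hz hz0 => by
    have := h z hz
    rw [norm_mul, mul_comm] at this
    exact le_of_mul_le_mul_right this (norm_pos_iff.2 hz0)
  intro z hz
  rcases eq_or_ne z 0 with rfl | hz0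
  · have hlim := ((hq.deriv 0 hz).continuousAt.norm.tendsto).mono_left
      (nhdsWithin_le_nhds (s := {(0 : ℂ)}ᶜ))
    refine le_of_tendsto hlim ?_
    filter_upwards [self_mem_nhdsWithin, nhdsWithin_le_nhds (isOpen_ball.mem_nhds hz)]
      with x hx0 hx using off_zero x hx hx0
  · exact off_zero z hz hz0

lemma norm_le_of_norm_mul_deriv_le {q : ℂ → ℂ} (hq : AnalyticOnNhd ℂ q unitDisk) (hq0 : q 0 = 0)
    {c : ℝ} (h : ∀ z ∈ unitDisk, ‖z * deriv q z‖ ≤ c * ‖z‖) :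
    ∀ z ∈ unitDisk, ‖q z‖ ≤ c * ‖z‖ := by
  intro z hz
  simpa [hq0] using (convex_ball (0 : ℂ) 1).norm_image_sub_le_of_norm_deriv_le
    (fun x hx => (hq x hx).differentiableAt) (norm_deriv_le_of_norm_mul_deriv_le hq h)
    (mem_ball_self one_pos) hz

lemma hasDerivAt_mul_deriv {q : ℂ → ℂ} {z : ℂ} (hq : AnalyticAt ℂ (deriv q) z) :
    HasDerivAt (fun x => x * deriv q x) (deriv q z + z * deriv (deriv q) z) z :=
  ((hasDerivAt_id' z).mul hq.differentiableAt.hasDerivAt).congr_deriv (by rw [one_mul])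

lemma exists_pos_add_eq_mul_eq {s t : ℝ} (hs : 0 < s) (ht : 0 < t) (h : 4 * t ≤ s ^ 2) :
    ∃ μ ν : ℝ, 0 < μ ∧ 0 < ν ∧ μ + ν = s ∧ μ * ν = t := by
  set d := Real.sqrt (s ^ 2 - 4 * t)
  have hd : d ^ 2 = s ^ 2 - 4 * t := Real.sq_sqrt (by linarith)
  have hds : d < s := by nlinarith [Real.sqrt_nonneg (s ^ 2 - 4 * t)]
  refine ⟨(s + d) / 2, (s - d) / 2, ?_, ?_, by ring, by nlinarith⟩
  · nlinarith [Real.sqrt_nonneg (s ^ 2 - 4 * t)]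
  · linarith

lemma norm_le_of_norm_euler_le {q : ℂ → ℂ} (hq : AnalyticOnNhd ℂ q unitDisk) (hq0 : q 0 = 0)
    {γ β K : ℝ} (hβ : 0 < β) (hβγ : β < γ)
    (h : ∀ z ∈ unitDisk, ‖γ * (z * deriv q z) + β * (z ^ 2 * deriv (deriv q) z)‖ ≤ K * ‖z‖) :
    ∀ z ∈ unitDisk, ‖q z‖ ≤ K / γ * ‖z‖ := by
  have hγβ : 0 < γ - β := sub_pos.2 hβγ
  set ν := β / (γ - β)
  -- `γ z q' + β z² q'' = (γ - β)(1 + νθ)(θ q)`, since `z² q'' = θ² q - θ q`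
  have hθ : ∀ z ∈ unitDisk, ‖z * deriv q z + ν * (z * deriv (fun x => x * deriv q x) z)‖ ≤
      K / (γ - β) * ‖z‖ := by
    intro z hz
    have hid : z * deriv q z + ν * (z * deriv (fun x => x * deriv q x) z) =
        (γ * (z * deriv q z) + β * (z ^ 2 * deriv (deriv q) z)) / (γ - β : ℝ) := by
      rw [(hasDerivAt_mul_deriv (hq.deriv z hz)).deriv]
      have : (γ : ℂ) - β ≠ 0 := by exact_mod_cast hγβ.ne'
      simp only [ν]
      push_cast
      field_simp
      ring
    rw [hid, norm_div, Complex.norm_of_nonneg hγβ.le, div_le_iff₀ hγβ]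
    calc _ ≤ K * ‖z‖ := h z hz
      _ = _ := by field_simp
  have hK : K / (γ - β) / (1 + ν) = K / γ := by
    have : γ ≠ 0 := by linarith
    simp only [ν]
    field_simp
    ring
  refine norm_le_of_norm_mul_deriv_le hq hq0 fun z hz => ?_
  have := norm_le_of_norm_add_mul_deriv_le (analyticOnNhd_id.mul hq.deriv) (by simp)
    (div_pos hβ hγβ) hθ z hz
  rwa [hK] at this

lemma norm_le_of_norm_add_euler_le {q : ℂ → ℂ} (hq : AnalyticOnNhd ℂ q unitDisk) (hq0 : q 0 = 0)
    {γ β K : ℝ} (hβ : 0 < β) (hβγ : β < γ) (hdisc : 4 * β ≤ (γ - β) ^ 2)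
    (h : ∀ z ∈ unitDisk,
      ‖q z + γ * (z * deriv q z) + β * (z ^ 2 * deriv (deriv q) z)‖ ≤ K * ‖z‖) :
    ∀ z ∈ unitDisk, ‖q z‖ ≤ K / (1 + γ) * ‖z‖ := by
  obtain ⟨μ, ν, hμ, hν, hsum, hprod⟩ := exists_pos_add_eq_mul_eq (sub_pos.2 hβγ) hβ hdisc
  -- `q + γ z q' + β z² q'' = (1 + νθ)(1 + μθ) q`, since `z² q'' = θ² q - θ q`
  set v : ℂ → ℂ := fun x => q x + μ * (x * deriv q x)
  have hv : AnalyticOnNhd ℂ v unitDisk :=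
    hq.add (analyticOnNhd_const.mul (analyticOnNhd_id.mul hq.deriv))
  have hv' : ∀ z ∈ unitDisk,
      ‖v z + ν * (z * deriv v z)‖ ≤ K * ‖z‖ := by
    intro z hz
    have hderiv : deriv v z = deriv q z + μ * (deriv q z + z * deriv (deriv q) z) :=
      ((hq z hz).differentiableAt.hasDerivAt.add
        ((hasDerivAt_mul_deriv (hq.deriv z hz)).const_mul (μ : ℂ))).deriv
    have hsumC : (μ : ℂ) + ν = γ - β := by exact_mod_cast hsum
    have hprodC : (μ : ℂ) * ν = β := by exact_mod_cast hprod
    convert h z hz using 2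
    rw [hderiv]
    linear_combination (z * deriv q z) * hsumC +
      (z * deriv q z + z ^ 2 * deriv (deriv q) z) * hprodC
  have hvq : ∀ z ∈ unitDisk, ‖q z + μ * (z * deriv q z)‖ ≤ K / (1 + ν) * ‖z‖ :=
    norm_le_of_norm_add_mul_deriv_le hv (by simp [v, hq0]) hν hv'
  have hK : K / (1 + ν) / (1 + μ) = K / (1 + γ) := by
    rw [div_div]
    congr 1
    nlinarith
  simpa [hK] using norm_le_of_norm_add_mul_deriv_le hq hq0 hμ hvq

lemma norm_sub_one_le_of_norm_euler_sub_one_le {p : ℂ → ℂ} (hp : AnalyticOnNhd ℂ p unitDisk)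
    (hp0 : p 0 = 1) {δ : ℕ} (hδ : δ = 0 ∨ δ = 1) {γ β K : ℝ} (hK : 0 ≤ K) (hβ : 0 < β)
    (hβγ : β < γ) (hdisc : 4 * β ≤ (γ - β) ^ 2)
    (h : ∀ z ∈ unitDisk,
      ‖p z ^ δ + γ * (z * deriv p z) + β * (z ^ 2 * deriv (deriv p) z) - 1‖ ≤ K * ‖z‖) :
    ∀ z ∈ unitDisk, ‖p z - 1‖ ≤ K / γ * ‖z‖ := by
  set q := fun z => p z - 1
  have hq : AnalyticOnNhd ℂ q unitDisk := hp.sub analyticOnNhd_const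
  have hq0 : q 0 = 0 := by simp [q, hp0]
  have hdq : deriv q = deriv p := funext fun z => deriv_sub_const 1
  rcases hδ with rfl | rfl
  · refine norm_le_of_norm_euler_le hq hq0 hβ hβγ fun z hz => ?_
    have := h z hz
    rwa [pow_zero, add_assoc, add_sub_cancel_left, ← hdq] at this
  · intro z hz
    refine (norm_le_of_norm_add_euler_le (K := K) hq hq0 hβ hβγ hdisc
      (fun z hz => ?_) z hz).trans ?_
    · convert h z hz using 2
      simp only [q, hdq, pow_one]
      ring
    · gcongr <;> linarith

lemma ω₀_nonneg : 0 ≤ ω₀ := by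
  refine Real.sSup_nonneg ?_
  rintro _ ⟨θ, -, rfl⟩
  exact norm_nonneg _

lemma le_of_coefficient_condition {M γ β : ℝ} (hM : 0 ≤ M) (hβ : 0 ≤ β)
    (h : M * (Real.exp 1 ^ 2 + 1) ^ ((7 : ℝ) / 2) ≤ Real.sqrt 2 * Real.exp 1 *
      (γ * (1 + Real.exp 1 ^ 2) ^ 2 + β * (1 - 2 * Real.exp 1 ^ 4 - Real.exp 1 ^ 2))) :
    5 * M + 3 / 2 * β ≤ γ := by
  set e := Real.exp 1
  have he : 7 ≤ e ^ 2 := by nlinarith [Real.exp_one_gt_d9]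
  set F := Real.sqrt 2 * e * (1 + e ^ 2) ^ 2
  have hF : 0 < F := by positivity
  have hS : 5 * F ≤ (e ^ 2 + 1) ^ ((7 : ℝ) / 2) := by
    refine (pow_le_pow_iff_left₀ (by positivity) (by positivity) two_ne_zero).1 ?_
    have hS2 : ((e ^ 2 + 1) ^ ((7 : ℝ) / 2)) ^ 2 = (e ^ 2 + 1) ^ 7 := by
      rw [← Real.rpow_natCast, ← Real.rpow_mul (by positivity)]
      norm_num
    have hF2 : (5 * F) ^ 2 = 50 * e ^ 2 * (1 + e ^ 2) ^ 4 := by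
      simp only [F]
      rw [mul_pow, mul_pow, mul_pow, Real.sq_sqrt zero_le_two]
      ring
    rw [hS2, hF2]
    have hcube : 50 * e ^ 2 ≤ (1 + e ^ 2) ^ 3 := by nlinarith
    calc 50 * e ^ 2 * (1 + e ^ 2) ^ 4 ≤ (1 + e ^ 2) ^ 3 * (1 + e ^ 2) ^ 4 := by gcongr
      _ = (e ^ 2 + 1) ^ 7 := by ring
  have hβF : 3 / 2 * β * F ≤ Real.sqrt 2 * e * β * (2 * e ^ 4 + e ^ 2 - 1) := by
    have : 3 / 2 * (1 + e ^ 2) ^ 2 ≤ 2 * e ^ 4 + e ^ 2 - 1 := by nlinarith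
    calc 3 / 2 * β * F = Real.sqrt 2 * e * β * (3 / 2 * (1 + e ^ 2) ^ 2) := by ring
      _ ≤ _ := by gcongr
  have hMF : 5 * M * F ≤ M * (e ^ 2 + 1) ^ ((7 : ℝ) / 2) := by
    rw [mul_comm 5 M, mul_assoc]; gcongr
  refine le_of_mul_le_mul_right ?_ hF
  linarith

namespace Complex

def artanh (x : ℂ) : ℂ := (log (1 + x) - log (1 - x)) / 2

lemma tanh_artanh {x : ℂ} (h₁ : 1 + x ≠ 0) (h₂ : 1 - x ≠ 0) : tanh (artanh x) = x := by
  have hE : exp (artanh x) ≠ 0 := exp_ne_zero _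
  have hE2 : exp (artanh x) ^ 2 = (1 + x) / (1 - x) := by
    rw [← exp_nat_mul, show ((2 : ℕ) : ℂ) * artanh x = log (1 + x) - log (1 - x) by
      rw [artanh]; push_cast; ring, exp_sub, exp_log h₁, exp_log h₂]
  have htanh : tanh (artanh x) = (exp (artanh x) ^ 2 - 1) / (exp (artanh x) ^ 2 + 1) := by
    rw [tanh_eq_sinh_div_cosh, ← mul_div_mul_left _ _ (two_ne_zero' ℂ), two_sinh, two_cosh,
      exp_neg, ← mul_div_mul_left _ _ hE]
    congr 1 <;> field_simp
  rw [htanh, hE2, div_sub_one h₂, div_add_one h₂, div_div_div_cancel_right₀ h₂]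
  ring

lemma norm_artanh_le {x : ℂ} (hx : ‖x‖ ≤ 1 / 2) : ‖artanh x‖ ≤ 3 / 2 * ‖x‖ := by
  have h₁ := norm_log_one_add_half_le_self hx
  have h₂ := norm_log_one_add_half_le_self (z := -x) (by rwa [norm_neg])
  rw [norm_neg, ← sub_eq_add_neg] at h₂
  rw [artanh, norm_div, RCLike.norm_ofNat]
  linarith [norm_sub_le (log (1 + x)) (log (1 - x))]

lemma differentiableOn_artanh : DifferentiableOn ℂ artanh (ball 0 1) := by
  intro x hx
  have hx' : ‖x‖ < 1 := mem_ball_zero_iff.1 hx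
  have h₁ : 1 + x ∈ slitPlane := mem_slitPlane_of_norm_lt_one hx'
  have h₂ : 1 - x ∈ slitPlane := by
    rw [sub_eq_add_neg]; exact mem_slitPlane_of_norm_lt_one (by rwa [norm_neg])
  exact ((((differentiableAt_const _).add differentiableAt_id).clog h₁).sub
    (((differentiableAt_const _).sub differentiableAt_id).clog h₂)).div_const 2
    |>.differentiableWithinAt

end Complex

lemma bean_artanh_sq_sub_one {a : ℂ} (ha : 0 < a.re) (ha2 : ‖a ^ 2 - 1‖ < 1) :
    bean (Complex.artanh (a ^ 2 - 1)) = a := by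
  have h₁ : 1 + (a ^ 2 - 1) ≠ 0 := by
    rw [add_sub_cancel]; exact pow_ne_zero 2 (fun h => by simp [h] at ha)
  have h₂ : 1 - (a ^ 2 - 1) ≠ 0 := fun h => by
    rw [sub_eq_zero] at h; rw [← h] at ha2; simp at ha2
  rw [bean, Complex.tanh_artanh h₁ h₂, add_sub_cancel, one_div]
  exact Complex.sq_cpow_two_inv ha

lemma subord_bean_of_norm_sub_one_le {p : ℂ → ℂ} (hp : DifferentiableOn ℂ p unitDisk)
    (hp0 : p 0 = 1) (h : ∀ z ∈ unitDisk, ‖p z - 1‖ ≤ 1 / 5) : Subord p bean := by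
  have hsq : ∀ z ∈ unitDisk, ‖p z ^ 2 - 1‖ ≤ 1 / 2 := fun z hz => by
    have h1 := h z hz
    have h2 : ‖p z + 1‖ ≤ 11 / 5 := by
      calc ‖p z + 1‖ = ‖(p z - 1) + 2‖ := by congr 1; ring
        _ ≤ ‖p z - 1‖ + 2 := by simpa using norm_add_le (p z - 1) 2
        _ ≤ 11 / 5 := by linarith
    calc ‖p z ^ 2 - 1‖ = ‖p z - 1‖ * ‖p z + 1‖ := by rw [← norm_mul]; congr 1; ring
      _ ≤ 1 / 5 * (11 / 5) := by gcongr
      _ ≤ 1 / 2 := by norm_num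
  have hre : ∀ z ∈ unitDisk, 0 < (p z).re := fun z hz => by
    have := (Complex.re_le_norm (1 - p z)).trans_eq (norm_sub_rev _ _)
    simp only [Complex.sub_re, Complex.one_re] at this
    linarith [h z hz]
  refine ⟨fun z => Complex.artanh (p z ^ 2 - 1), ?_, by simp [hp0, Complex.artanh], ?_, ?_⟩
  · refine Complex.differentiableOn_artanh.comp ((hp.pow 2).sub_const 1) fun z hz => ?_
    exact mem_ball_zero_iff.2 ((hsq z hz).trans_lt (by norm_num))
  · intro z hz
    calc ‖Complex.artanh (p z ^ 2 - 1)‖ ≤ 3 / 2 * ‖p z ^ 2 - 1‖ := Complex.norm_artanh_le (hsq z hz)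
      _ ≤ 3 / 2 * (1 / 2) := by gcongr; exact hsq z hz
      _ < 1 := by norm_num
  · intro z hz
    exact (bean_artanh_sq_sub_one (hre z hz) ((hsq z hz).trans_lt (by norm_num))).symm

theorem stmt_15_general (δ : ℕ) (hδ : δ = 0 ∨ δ = 1)
    (A B : ℝ) (hB1 : -1 < B) (hB0 : B ≤ 0) (hA0 : 0 < A)
    (γ β : ℝ) (hβ : 0 < β)
    (hcond : ((1 + A) / (1 + B) + ω₀ ^ δ) * (Real.exp 1 ^ 2 + 1) ^ ((7 : ℝ) / 2) ≤
        Real.sqrt 2 * Real.exp 1 *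
          (γ * (1 + Real.exp 1 ^ 2) ^ 2 + β * (1 - 2 * Real.exp 1 ^ 4 - Real.exp 1 ^ 2)))
    (p : ℂ → ℂ) (hp : DifferentiableOn ℂ p unitDisk) (hp0 : p 0 = 1)
    (hsub : Subord (fun z => p z ^ δ + (γ : ℂ) * (z * deriv p z) +
        (β : ℂ) * (z ^ 2 * deriv (deriv p) z))
        (fun z => (1 + (A : ℂ) * z) / (1 + (B : ℂ) * z))) :
    Subord p bean := by
  set K := (A - B) / (1 + B)
  have hK : 0 ≤ K := div_nonneg (by linarith) (by linarith)
  have hγ : 5 * (K + 1) + 3 / 2 * β ≤ γ := by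
    have hAB : (1 + A) / (1 + B) = K + 1 := by
      have : 1 + B ≠ 0 := by linarith
      simp only [K]; field_simp; ring
    have hω : 0 ≤ ω₀ ^ δ := pow_nonneg ω₀_nonneg δ
    have := le_of_coefficient_condition (by rw [hAB]; linarith) hβ.le hcond
    rw [hAB] at this
    linarith
  have hpq := norm_sub_one_le_of_norm_euler_sub_one_le (hp.analyticOnNhd isOpen_ball) hp0 hδ hK
    hβ (by linarith) (by nlinarith)
    (norm_sub_one_le_of_subord_janowski_ofReal hB1 hB0 (by linarith) hsub)
  refine subord_bean_of_norm_sub_one_le hp hp0 fun z hz => (hpq z hz).trans ?_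
  have hKγ : K / γ ≤ 1 / 5 := by rw [div_le_iff₀ (by linarith)]; linarith
  calc K / γ * ‖z‖ ≤ 1 / 5 * 1 := by gcongr; exact (mem_ball_zero_iff.1 hz).le
    _ = 1 / 5 := by ring

theorem stmt_15 (δ : ℕ) (hδ : δ = 0 ∨ δ = 1)
    (A B : ℝ) (hB1 : -1 < B) (hB0 : B ≤ 0) (hA0 : 0 < A) (hA1 : A ≤ 1)
    (γ β : ℝ) (hγ : 0 < γ) (hβ : 0 < β)
    (hcond : ((1 + A) / (1 + B) + ω₀ ^ δ) * (Real.exp 1 ^ 2 + 1) ^ ((7 : ℝ) / 2) ≤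
        Real.sqrt 2 * Real.exp 1 *
          (γ * (1 + Real.exp 1 ^ 2) ^ 2 + β * (1 - 2 * Real.exp 1 ^ 4 - Real.exp 1 ^ 2)))
    (p : ℂ → ℂ) (hp : DifferentiableOn ℂ p unitDisk) (hp0 : p 0 = 1)
    (hsub : Subord (fun z => p z ^ δ + (γ : ℂ) * (z * deriv p z) +
        (β : ℂ) * (z ^ 2 * deriv (deriv p) z))
        (fun z => (1 + (A : ℂ) * z) / (1 + (B : ℂ) * z))) :
    Subord p bean :=
  stmt_15_general δ hδ A B hB1 hB0 hA0 γ β hβ hcond p hp hp0 hsub
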